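/- arXiv:1311.3948 — 2 statements merged into one kernel-verified Lean document; each statement's English description precedes it below -/
import Mathlib

section
/- Let Q be a word of length m in the simple reflections of a finite Coxeter system (W,S), let Q' be obtained from Q by doubling the letter at position p (doubled positions p and p+1 of Q'), and let ρ ∈ W. Assume {p} is NOT a face of Δ(Q,ρ). Then Δ(Q',ρ) is isomorphic to the suspension of Δ(Q,ρ) with suspension vertices p and p+1: a set F ⊆ {1,…,m+1} is a face of Δ(Q',ρ) if and only if F contains at most one of p, p+1 and ψ^{-1}(F \ {p,p+1}) is a face of Δ(Q,ρ), where ψ : {1,…,m} \ {p} → {1,…,m+1} \ {p,p+1} is the order-preserving bijection (ψ(i) = i for i < p, ψ(i) = i+1 for i > p). (Note that no face of Δ(Q,ρ) contains p in this case.) -/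
/-!
Positions `p.castSucc` and `p.succ` of `doubleAt Q p` carry the same letter, so no reduced
expression uses both; hence every reduced subword of the doubled word lives in one of the two
copies of `Q` obtained by deleting a doubled position. Consequently `F` is a face of `Δ(Q', ρ)`
iff one of its two pullbacks to `Q` is a face. Since `{p}` is not a face of `Δ(Q, ρ)`, a pullback
can be a face only if it avoids `p`, i.e. only if `F` avoids the other doubled position, and then
it is the pullback of `F \ {p, p+1}`.
-/

namespace SubwordComplexNil

variable {B W : Type*} [Group W] {M : CoxeterMatrix B}

/-- The set of positions `P` in the word `Q : Fin m → B` contains an embedded reduced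
expression of `ρ`. -/
def ContainsReduced (cs : CoxeterSystem M W) {m : ℕ} (Q : Fin m → B)
    (P : Finset (Fin m)) (ρ : W) : Prop :=
  ∃ I : Finset (Fin m), I ⊆ P ∧ I.card = cs.length ρ ∧
    cs.wordProd ((I.sort (· ≤ ·)).map Q) = ρ

/-- `F` is a face of the subword complex `Δ(Q, ρ)`. -/
def IsFace (cs : CoxeterSystem M W) {m : ℕ} (Q : Fin m → B) (ρ : W)
    (F : Finset (Fin m)) : Prop :=
  ContainsReduced cs Q Fᶜ ρ

/-- The word obtained from `Q` by doubling the letter at position `p`.  The doubled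
positions of the new word are `p.castSucc` and `p.succ`. -/
def doubleAt {m : ℕ} (Q : Fin m → B) (p : Fin m) (i : Fin (m + 1)) : B :=
  if h : (i : ℕ) ≤ (p : ℕ) then Q ⟨i, lt_of_le_of_lt h p.isLt⟩
  else Q ⟨(i : ℕ) - 1, by have := i.isLt; omega⟩

theorem _root_.Finset.sort_eq_append_cons_cons {α : Type*} [LinearOrder α] {s : Finset α}
    {a b : α} (hab : a ⋖ b) (ha : a ∈ s) (hb : b ∈ s) :
    s.sort = (s.filter (· < a)).sort ++ a :: b :: (s.filter (b < ·)).sort := by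
  have hlt := hab.lt
  refine s.sortedLT_sort.eq_of_mem_iff (List.sortedLT_iff_pairwise.2 ?_) fun x => ?_
  · simp only [List.pairwise_append, List.pairwise_cons, ← List.sortedLT_iff_pairwise,
      Finset.sortedLT_sort, Finset.mem_sort, Finset.mem_filter, List.mem_cons]
    refine ⟨trivial, ⟨?_, ?_, trivial⟩, ?_⟩
    · rintro x (rfl | ⟨-, hx⟩) <;> order
    · intro x hx; order
    · rintro x ⟨-, hx⟩ y (rfl | rfl | ⟨-, hy⟩) <;> order
  · simp only [List.mem_append, List.mem_cons, Finset.mem_sort, Finset.mem_filter]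
    have hnot_between : a < x → ¬x < b := @hab.2 x
    constructor
    · intro hx
      rcases lt_trichotomy x a with h | rfl | h
      · tauto
      · tauto
      · rcases lt_trichotomy x b with h' | rfl | h' <;> tauto
    · rintro (h | rfl | rfl | h) <;> tauto

theorem _root_.Fin.succAbove_succ_eq_succAbove_castSucc {n : ℕ} {p i : Fin n} (h : i ≠ p) :
    p.succ.succAbove i = p.castSucc.succAbove i := by
  rcases h.lt_or_gt with h | h
  · rw [Fin.succAbove_succ_of_le _ _ h.le, Fin.succAbove_castSucc_of_lt _ _ h]
  · rw [Fin.succAbove_succ_of_lt _ _ h, Fin.succAbove_castSucc_of_le _ _ h.le]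

section ContainsReduced

variable {cs : CoxeterSystem M W} {m n : ℕ} {ρ : W}

theorem ContainsReduced.mono {Q : Fin m → B} {P P' : Finset (Fin m)}
    (h : ContainsReduced cs Q P ρ) (hPP' : P ⊆ P') : ContainsReduced cs Q P' ρ :=
  let ⟨I, hIP, hcard, hprod⟩ := h
  ⟨I, hIP.trans hPP', hcard, hprod⟩

theorem containsReduced_map_iff (f : Fin m ↪o Fin n) (Q : Fin n → B) (P : Finset (Fin m)) :
    ContainsReduced cs Q (P.map f.toEmbedding) ρ ↔ ContainsReduced cs (Q ∘ f) P ρ := by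
  have hsort (J : Finset (Fin m)) : ((J.map f.toEmbedding).sort.map Q) = J.sort.map (Q ∘ f) := by
    rw [← (f.strictMono.strictMonoOn J).map_finsetSort, List.map_map]
    rfl
  constructor
  · rintro ⟨I, hIP, hcard, hprod⟩
    obtain ⟨J, hJP, rfl⟩ := Finset.subset_map_iff.1 hIP
    exact ⟨J, hJP, by rwa [Finset.card_map] at hcard, by rwa [hsort] at hprod⟩
  · rintro ⟨J, hJP, hcard, hprod⟩
    exact ⟨J.map f.toEmbedding, Finset.map_subset_map.2 hJP, by rwa [Finset.card_map],
      by rwa [hsort]⟩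

theorem containsReduced_erase_iff (Q : Fin (n + 1) → B) (d : Fin (n + 1))
    (P : Finset (Fin (n + 1))) :
    ContainsReduced cs Q (P.erase d) ρ ↔ ContainsReduced cs (Q ∘ d.succAbove)
      (P.preimage d.succAbove Fin.succAbove_right_injective.injOn) ρ := by
  have hP : (P.preimage d.succAbove Fin.succAbove_right_injective.injOn).map
      (Fin.succAboveOrderEmb d).toEmbedding = P.erase d := by
    ext x
    simp only [Finset.mem_map, Finset.mem_preimage, Finset.mem_erase]
    constructor
    · rintro ⟨a, ha, rfl⟩
      exact ⟨Fin.succAbove_ne _ _, ha⟩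
    · rintro ⟨hx, hxP⟩
      obtain ⟨a, rfl⟩ := Fin.exists_succAbove_eq hx
      exact ⟨a, hxP, rfl⟩
  rw [← hP, containsReduced_map_iff]
  rfl

theorem ContainsReduced.erase_or_erase {Q : Fin m → B} {P : Finset (Fin m)} {a b : Fin m}
    (hab : a ⋖ b) (hQ : Q a = Q b) (h : ContainsReduced cs Q P ρ) :
    ContainsReduced cs Q (P.erase a) ρ ∨ ContainsReduced cs Q (P.erase b) ρ := by
  obtain ⟨I, hIP, hcard, hprod⟩ := h
  by_cases ha : a ∈ I
  · by_cases hb : b ∈ I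
    · exfalso
      have hsplit := Finset.sort_eq_append_cons_cons hab ha hb
      have hlen := congrArg List.length hsplit
      have hcancel : cs.wordProd (I.sort.map Q) =
          cs.wordProd (((I.filter (· < a)).sort ++ (I.filter (b < ·)).sort).map Q) := by
        simp [hsplit, cs.wordProd_append, cs.wordProd_cons, hQ]
      have hle := cs.length_wordProd_le
        (((I.filter (· < a)).sort ++ (I.filter (b < ·)).sort).map Q)
      rw [← hcancel, hprod] at hle
      simp only [Finset.length_sort, List.length_append, List.length_cons, List.length_map]
        at hlen hle
      omega
    · exact Or.inr ⟨I, Finset.subset_erase.2 ⟨hIP, hb⟩, hcard, hprod⟩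
  · exact Or.inl ⟨I, Finset.subset_erase.2 ⟨hIP, ha⟩, hcard, hprod⟩

theorem IsFace.subset {Q : Fin m → B} {F G : Finset (Fin m)} (h : IsFace cs Q ρ F)
    (hGF : G ⊆ F) : IsFace cs Q ρ G :=
  ContainsReduced.mono h (Finset.compl_subset_compl.2 hGF)

theorem isFace_iff_of_not_isFace_singleton {Q : Fin m → B} {p : Fin m}
    (hp : ¬IsFace cs Q ρ {p}) {F : Finset (Fin m)} :
    IsFace cs Q ρ F ↔ p ∉ F ∧ IsFace cs Q ρ (F.erase p) := by
  constructor
  · intro h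
    have hpF : p ∉ F := fun hpF => hp (h.subset (Finset.singleton_subset_iff.2 hpF))
    exact ⟨hpF, by rwa [Finset.erase_eq_of_notMem hpF]⟩
  · rintro ⟨hpF, h⟩
    rwa [Finset.erase_eq_of_notMem hpF] at h

end ContainsReduced

section doubleAt

variable {m : ℕ} (Q : Fin m → B) (p : Fin m)

theorem doubleAt_castSucc_of_le {i : Fin m} (h : i ≤ p) : doubleAt Q p i.castSucc = Q i := by
  simp [doubleAt, Fin.le_def.1 h]

theorem doubleAt_succ_of_le {i : Fin m} (h : p ≤ i) : doubleAt Q p i.succ = Q i := by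
  simp [doubleAt, not_lt.2 h]

theorem doubleAt_comp_succAbove_castSucc : doubleAt Q p ∘ p.castSucc.succAbove = Q := by
  funext i
  rcases lt_or_ge i p with h | h
  · rw [Function.comp_apply, Fin.succAbove_castSucc_of_lt _ _ h, doubleAt_castSucc_of_le Q p h.le]
  · rw [Function.comp_apply, Fin.succAbove_castSucc_of_le _ _ h, doubleAt_succ_of_le Q p h]

theorem doubleAt_comp_succAbove_succ : doubleAt Q p ∘ p.succ.succAbove = Q := by
  funext i
  rcases le_or_gt i p with h | h
  · rw [Function.comp_apply, Fin.succAbove_succ_of_le _ _ h, doubleAt_castSucc_of_le Q p h]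
  · rw [Function.comp_apply, Fin.succAbove_succ_of_lt _ _ h, doubleAt_succ_of_le Q p h.le]

variable {cs : CoxeterSystem M W} {ρ : W}

theorem containsReduced_doubleAt_iff {P : Finset (Fin (m + 1))} :
    ContainsReduced cs (doubleAt Q p) P ρ ↔
      ContainsReduced cs Q (P.preimage p.castSucc.succAbove
        Fin.succAbove_right_injective.injOn) ρ ∨
      ContainsReduced cs Q (P.preimage p.succ.succAbove
        Fin.succAbove_right_injective.injOn) ρ := by
  have h₁ := containsReduced_erase_iff (cs := cs) (ρ := ρ) (doubleAt Q p) p.castSucc P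
  have h₂ := containsReduced_erase_iff (cs := cs) (ρ := ρ) (doubleAt Q p) p.succ P
  rw [doubleAt_comp_succAbove_castSucc] at h₁
  rw [doubleAt_comp_succAbove_succ] at h₂
  rw [← h₁, ← h₂]
  constructor
  · exact ContainsReduced.erase_or_erase (by simp [Fin.covBy_iff])
      ((doubleAt_castSucc_of_le Q p le_rfl).trans (doubleAt_succ_of_le Q p le_rfl).symm)
  · rintro (h | h) <;> exact h.mono (Finset.erase_subset _ _)

theorem isFace_doubleAt_iff {F : Finset (Fin (m + 1))} :
    IsFace cs (doubleAt Q p) ρ F ↔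
      IsFace cs Q ρ (F.preimage p.castSucc.succAbove Fin.succAbove_right_injective.injOn) ∨
      IsFace cs Q ρ (F.preimage p.succ.succAbove Fin.succAbove_right_injective.injOn) := by
  simp only [IsFace]
  rw [containsReduced_doubleAt_iff, Finset.preimage_compl _ Fin.succAbove_right_injective,
    Finset.preimage_compl _ Fin.succAbove_right_injective]

theorem erase_preimage_succAbove_castSucc (F : Finset (Fin (m + 1))) :
    (F.preimage p.castSucc.succAbove Fin.succAbove_right_injective.injOn).erase p =
      (F \ {p.castSucc, p.succ}).preimage p.castSucc.succAbove
        Fin.succAbove_right_injective.injOn := by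
  ext j
  simp only [Finset.mem_erase, Finset.mem_preimage, Finset.mem_sdiff, Finset.mem_insert,
    Finset.mem_singleton, Fin.succAbove_ne, false_or, ← Fin.succAbove_castSucc_self,
    Fin.succAbove_right_inj]
  tauto

theorem erase_preimage_succAbove_succ (F : Finset (Fin (m + 1))) :
    (F.preimage p.succ.succAbove Fin.succAbove_right_injective.injOn).erase p =
      (F \ {p.castSucc, p.succ}).preimage p.castSucc.succAbove
        Fin.succAbove_right_injective.injOn := by
  rw [← erase_preimage_succAbove_castSucc]
  ext j
  simp only [Finset.mem_erase, Finset.mem_preimage, and_congr_right_iff]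
  exact fun hj => by rw [Fin.succAbove_succ_eq_succAbove_castSucc hj]

end doubleAt

theorem doubled_word_suspension_general (cs : CoxeterSystem M W)
    {m : ℕ} (Q : Fin m → B) (p : Fin m) (ρ : W)
    (hp : ¬ IsFace cs Q ρ {p}) (F : Finset (Fin (m + 1))) :
    IsFace cs (doubleAt Q p) ρ F ↔
      (¬(p.castSucc ∈ F ∧ p.succ ∈ F) ∧
        IsFace cs Q ρ ((F \ {p.castSucc, p.succ}).preimage p.castSucc.succAbove
          (Fin.succAbove_right_injective.injOn))) := by
  have h₁ :
      IsFace cs Q ρ (F.preimage p.castSucc.succAbove Fin.succAbove_right_injective.injOn) ↔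
      p.succ ∉ F ∧ IsFace cs Q ρ ((F \ {p.castSucc, p.succ}).preimage p.castSucc.succAbove
        Fin.succAbove_right_injective.injOn) := by
    rw [isFace_iff_of_not_isFace_singleton hp, erase_preimage_succAbove_castSucc,
      Finset.mem_preimage, Fin.succAbove_castSucc_self]
  have h₂ : IsFace cs Q ρ (F.preimage p.succ.succAbove Fin.succAbove_right_injective.injOn) ↔
      p.castSucc ∉ F ∧ IsFace cs Q ρ ((F \ {p.castSucc, p.succ}).preimage p.castSucc.succAbove
        Fin.succAbove_right_injective.injOn) := by
    rw [isFace_iff_of_not_isFace_singleton hp, erase_preimage_succAbove_succ,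
      Finset.mem_preimage, Fin.succAbove_succ_self]
  rw [isFace_doubleAt_iff, h₁, h₂]
  tauto

/-- If `{p}` is not a face of `Δ(Q, ρ)`, then `Δ(Q', ρ)` is the suspension of
`Δ(Q, ρ)` with suspension vertices the two doubled positions: `F` is a face of
`Δ(Q', ρ)` iff `F` contains at most one of the doubled positions and
`ψ⁻¹(F \ {p, p+1})` is a face of `Δ(Q, ρ)`, where the order-preserving bijection `ψ`
is realized by `(p.castSucc).succAbove`. -/
theorem doubled_word_suspension [Finite W] (cs : CoxeterSystem M W)
    {m : ℕ} (Q : Fin m → B) (p : Fin m) (ρ : W)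
    (hp : ¬ IsFace cs Q ρ {p}) (F : Finset (Fin (m + 1))) :
    IsFace cs (doubleAt Q p) ρ F ↔
      (¬(p.castSucc ∈ F ∧ p.succ ∈ F) ∧
        IsFace cs Q ρ ((F \ {p.castSucc, p.succ}).preimage p.castSucc.succAbove
          (Fin.succAbove_right_injective.injOn))) :=
  doubled_word_suspension_general cs Q p ρ hp F

end SubwordComplexNil
end

section
/- Let Q be a word of length m in the simple reflections of a finite Coxeter system (W,S), let Q' be obtained from Q by doubling the letter at position p (doubled positions p and p+1 of Q'), and let ρ ∈ W. Assume {p} IS a face of Δ(Q,ρ). Then the edge subdivision of Δ(Q',ρ) along the edge η = {p, p+1} with new vertex r is isomorphic to the suspension of Δ(Q,ρ) with suspension vertices a, b, under the bijection of vertex sets sending r to position p of Q, the suspension vertices a, b to p and p+1 respectively, and each other vertex j of Δ(Q',ρ) (j ≠ p, p+1) to ψ^{-1}(j), where ψ : {1,…,m} \ {p} → {1,…,m+1} \ {p,p+1} is the order-preserving bijection (ψ(i) = i for i < p, ψ(i) = i+1 for i > p). -/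
namespace SubwordComplexNil

variable {B W : Type*} [Group W] {M : CoxeterMatrix B}

/-- The faces of the edge subdivision `Sub_{{s,t}}(X)` of a simplicial complex `X`
(given as a predicate on finsets of vertices) along the edge `{s, t}` with new
vertex `r`. -/
def SubdivFaces {V : Type*} [DecidableEq V] (X : Finset V → Prop) (s t r : V)
    (F : Finset V) : Prop :=
  (X F ∧ ¬ {s, t} ⊆ F) ∨
    ∃ σ : Finset V, (X ({s, t} ∪ σ) ∧ Disjoint {s, t} σ) ∧
      (F = insert r σ ∨ F = insert r (insert s σ) ∨ F = insert r (insert t σ))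

/-- The faces of the suspension of a simplicial complex `Y` on the vertex set `Fin m`,
with suspension vertices `Sum.inr false` and `Sum.inr true`. -/
def SuspFaces {m : ℕ} (Y : Finset (Fin m) → Prop) (F : Finset (Fin m ⊕ Bool)) : Prop :=
  ∃ σ : Finset (Fin m), Y σ ∧
    (F = σ.image Sum.inl ∨ F = insert (Sum.inr false) (σ.image Sum.inl) ∨
      F = insert (Sum.inr true) (σ.image Sum.inl))

/-- The vertex bijection: the new subdivision vertex (`none`) goes to position `p` of
`Q`; the doubled positions go to the suspension vertices; every other position `j` of
the doubled word goes to `ψ⁻¹(j) = p.predAbove j`. -/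
def theta {m : ℕ} (p : Fin m) : Option (Fin (m + 1)) → Fin m ⊕ Bool
  | none => Sum.inl p
  | some j =>
      if j = p.castSucc then Sum.inr false
      else if j = p.succ then Sum.inr true
      else Sum.inl (p.predAbove j)

/-!
Write the doubled word as `Q' = Q ∘ p.predAbove`. A reduced word never contains two equal adjacent
letters, and positions of a reduced subword of `Q ∘ f` (with `f` monotone) lying in one fibre of
`f` would be adjacent in it and carry the same letter; so the reduced subwords of `Q'` are those of
`Q`, read through `p.predAbove`. Hence `G` is a face of `Δ(Q', ρ)` exactly when the set of
positions of `Q` whose whole fibre lies in `G` is a face of `Δ(Q, ρ)`. Through `theta p`, a face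
of the subdivision without the new vertex is a face of `Δ(Q', ρ)` not containing both `p, p + 1`,
and one with the new vertex comes from a face of `Δ(Q', ρ)` containing the edge `{p, p + 1}`; in
both cases the fibre condition gives exactly the corresponding face of the suspension.
-/

theorem _root_.List.pairwise_lt_of_isChain_ne {α : Type*} [PartialOrder α] {l : List α}
    (hle : l.Pairwise (· ≤ ·)) (hne : l.IsChain (· ≠ ·)) : l.Pairwise (· < ·) := by
  rw [← List.isChain_iff_pairwise, List.isChain_iff_getElem] at *
  exact fun i hi => lt_of_le_of_ne (hle i hi) (hne i hi)

theorem _root_.List.toFinset_sort_of_pairwise_lt {α : Type*} [LinearOrder α] {l : List α}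
    (hl : l.Pairwise (· < ·)) : l.toFinset.sort (· ≤ ·) = l :=
  (List.toFinset_sort _ hl.nodup).2 (hl.imp le_of_lt)

theorem _root_.List.exists_pairwise_lt_map_eq {α β : Type*} [LinearOrder α] [Preorder β]
    {f : α → β} (hf : Monotone f) {s : Set α} {l : List β} (hl : l.Pairwise (· < ·))
    (hls : ∀ b ∈ l, b ∈ f '' s) :
    ∃ l' : List α, l'.Pairwise (· < ·) ∧ (∀ a ∈ l', a ∈ s) ∧ l'.map f = l := by
  induction l with
  | nil => exact ⟨[], .nil, by simp, rfl⟩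
  | cons b l ih =>
    rw [List.pairwise_cons] at hl
    obtain ⟨a, ha, rfl⟩ := hls b List.mem_cons_self
    obtain ⟨l', hl', hl's, rfl⟩ := ih hl.2 fun b hb => hls b (List.mem_cons_of_mem _ hb)
    refine ⟨a :: l', List.pairwise_cons.2 ⟨fun a' ha' => ?_, hl'⟩, ?_, rfl⟩
    · exact lt_of_not_ge fun h => (hl.1 _ (List.mem_map_of_mem ha')).not_ge (hf h)
    · simpa [ha] using hl's

theorem _root_.CoxeterSystem.not_isReduced_cons_cons_self (cs : CoxeterSystem M W) (s : B)
    (ω : List B) : ¬ cs.IsReduced (s :: s :: ω) := by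
  intro h
  have hle := cs.length_wordProd_le ω
  rw [CoxeterSystem.IsReduced, cs.wordProd_cons, cs.wordProd_cons,
    cs.simple_mul_simple_cancel_left] at h
  simp only [List.length_cons] at h
  omega

theorem _root_.CoxeterSystem.IsReduced.isChain_ne {cs : CoxeterSystem M W} {ω : List B}
    (hω : cs.IsReduced ω) : ω.IsChain (· ≠ ·) := by
  rw [List.isChain_iff_getElem]
  intro i hi heq
  have hdrop := hω.drop i
  rw [List.drop_eq_getElem_cons (by omega), List.drop_eq_getElem_cons hi, heq] at hdrop
  exact cs.not_isReduced_cons_cons_self _ _ hdrop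

variable (cs : CoxeterSystem M W)

theorem containsReduced_iff_exists_list {n : ℕ} (Q : Fin n → B) (P : Finset (Fin n)) (ρ : W) :
    ContainsReduced cs Q P ρ ↔ ∃ L : List (Fin n), L.Pairwise (· < ·) ∧ (∀ i ∈ L, i ∈ P) ∧
      L.length = cs.length ρ ∧ cs.wordProd (L.map Q) = ρ := by
  constructor
  · rintro ⟨I, hIP, hcard, hprod⟩
    exact ⟨I.sort (· ≤ ·), List.sortedLT_iff_pairwise.1 I.sortedLT_sort,
      fun i hi => hIP ((Finset.mem_sort _).1 hi), by rw [Finset.length_sort, hcard], hprod⟩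
  · rintro ⟨L, hL, hLP, hlen, hprod⟩
    refine ⟨L.toFinset, fun i hi => hLP i (List.mem_toFinset.1 hi), ?_, ?_⟩
    · rw [List.toFinset_card_of_nodup hL.nodup, hlen]
    · rwa [List.toFinset_sort_of_pairwise_lt hL]

theorem containsReduced_comp_iff {k n : ℕ} (Q : Fin k → B) {f : Fin n → Fin k}
    (hf : Monotone f) (P : Finset (Fin n)) (ρ : W) :
    ContainsReduced cs (Q ∘ f) P ρ ↔ ContainsReduced cs Q (P.image f) ρ := by
  rw [containsReduced_iff_exists_list, containsReduced_iff_exists_list]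
  constructor
  · rintro ⟨L, hL, hLP, hlen, hprod⟩
    have hred : cs.IsReduced ((L.map f).map Q) := by
      rw [CoxeterSystem.IsReduced, List.map_map, hprod, List.length_map, hlen]
    have hne : (L.map f).IsChain (· ≠ ·) :=
      (List.isChain_map Q).1 hred.isChain_ne |>.imp fun a b h hab => h (congrArg Q hab)
    refine ⟨L.map f, List.pairwise_lt_of_isChain_ne ?_ hne, ?_, by rw [List.length_map, hlen],
      by rwa [List.map_map]⟩
    · exact List.pairwise_map.2 (hL.imp fun h => hf h.le)
    · simp only [List.mem_map]
      rintro _ ⟨i, hi, rfl⟩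
      exact Finset.mem_image_of_mem f (hLP i hi)
  · rintro ⟨L, hL, hLP, hlen, hprod⟩
    obtain ⟨L', hL', hL'P, rfl⟩ := List.exists_pairwise_lt_map_eq hf hL
      (s := (P : Set (Fin n))) (by simpa using hLP)
    exact ⟨L', hL', hL'P, by rwa [List.length_map] at hlen, by rwa [List.map_map] at hprod⟩

theorem isFace_comp_iff {k n : ℕ} (Q : Fin k → B) {f : Fin n → Fin k} (hf : Monotone f)
    (G : Finset (Fin n)) (ρ : W) :
    IsFace cs (Q ∘ f) ρ G ↔ IsFace cs Q ρ (Gᶜ.image f)ᶜ := by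
  rw [IsFace, IsFace, compl_compl, containsReduced_comp_iff cs Q hf]

theorem doubleAt_eq_comp_predAbove {m : ℕ} (Q : Fin m → B) (p : Fin m) :
    doubleAt Q p = Q ∘ p.predAbove := by
  ext i
  simp only [doubleAt, Function.comp_apply, Fin.predAbove, Fin.lt_def, Fin.val_castSucc]
  split_ifs <;> first | rfl | omega

theorem _root_.Fin.predAbove_eq_self_iff {m : ℕ} (p : Fin m) (j : Fin (m + 1)) :
    p.predAbove j = p ↔ j = p.castSucc ∨ j = p.succ := by
  simp only [Fin.predAbove, Fin.ext_iff, Fin.lt_def, Fin.val_castSucc, Fin.val_succ]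
  split_ifs <;> simp <;> omega

theorem _root_.Fin.predAbove_eq_iff_of_ne {m : ℕ} {p i : Fin m} (h : i ≠ p) (j : Fin (m + 1)) :
    p.predAbove j = i ↔ j = p.castSucc.succAbove i := by
  constructor
  · rintro rfl
    have hj : j ≠ p.castSucc := by rintro rfl; simp at h
    exact (Fin.succAbove_predAbove hj).symm
  · rintro rfl
    exact Fin.predAbove_succAbove p i

theorem _root_.Fin.succAbove_castSucc_ne_succ {m : ℕ} {p i : Fin m} (h : i ≠ p) :
    p.castSucc.succAbove i ≠ p.succ := by
  rw [← Fin.succAbove_castSucc_self]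
  exact fun h' => h (Fin.succAbove_right_injective h')

def thetaEquiv {m : ℕ} (p : Fin m) : Option (Fin (m + 1)) ≃ Fin m ⊕ Bool where
  toFun := theta p
  invFun
    | Sum.inl q => if q = p then none else some (p.castSucc.succAbove q)
    | Sum.inr false => some p.castSucc
    | Sum.inr true => some p.succ
  left_inv
    | none => by simp [theta]
    | some j => by
      by_cases hc : j = p.castSucc
      · simp [theta, hc]
      by_cases hd : j = p.succ
      · simp [theta, hd, (Fin.castSucc_lt_succ (i := p)).ne']
      · have hj : p.predAbove j ≠ p := by simp [Fin.predAbove_eq_self_iff, hc, hd]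
        simp [theta, hc, hd, hj, Fin.succAbove_predAbove hc]
  right_inv
    | Sum.inl q => by
      by_cases hq : q = p
      · simp [theta, hq]
      · simp [theta, hq, Fin.succAbove_ne, Fin.succAbove_castSucc_ne_succ hq]
    | Sum.inr false => by simp [theta]
    | Sum.inr true => by simp [theta, (Fin.castSucc_lt_succ (i := p)).ne']

theorem subdivFaces_iff {α : Type*} [DecidableEq α] (Y : Finset α → Prop) {s t : α}
    (hst : s ≠ t) (F : Finset (Option α)) :
    SubdivFaces (fun G => ∃ G₀, Y G₀ ∧ G = G₀.image some) (some s) (some t) none F ↔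
      Y (if none ∈ F then {s, t} ∪ F.eraseNone else F.eraseNone) ∧
        ¬ (s ∈ F.eraseNone ∧ t ∈ F.eraseNone) := by
  constructor
  · rintro (⟨⟨G₀, hG₀, rfl⟩, hsub⟩ | ⟨σ, ⟨⟨G₀, hG₀, hσ⟩, hdisj⟩, rfl | rfl | rfl⟩)
    · simp_all [Finset.insert_subset_iff]
    all_goals
      have hG : G₀ = {s, t} ∪ σ.eraseNone := by
        ext a; simpa using (Finset.ext_iff.1 hσ (some a)).symm
      simp only [Finset.disjoint_insert_left, Finset.disjoint_singleton_left] at hdisj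
      refine ⟨?_, by simp [hdisj, hst, hst.symm]⟩
      convert hG₀ using 1
      ext; grind [Finset.mem_eraseNone]
  · rintro ⟨hY, hst'⟩
    split_ifs at hY with hF
    · refine Or.inr ⟨F.erase none \ {some s, some t}, ⟨⟨_, hY, ?_⟩, Finset.disjoint_sdiff⟩, ?_⟩
      · ext (_ | a) <;> simp
      simp only [Finset.mem_eraseNone, not_and] at hst'
      by_cases hs : some s ∈ F
      · exact Or.inr (Or.inl (by ext; grind))
      by_cases ht : some t ∈ F
      · exact Or.inr (Or.inr (by ext; grind))
      · exact Or.inl (by ext; grind)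
    · refine Or.inl ⟨⟨_, hY, ?_⟩, by simpa [Finset.insert_subset_iff] using hst'⟩
      ext (_ | a) <;> simp [hF]

theorem suspFaces_iff {m : ℕ} (Y : Finset (Fin m) → Prop) (T : Finset (Fin m ⊕ Bool)) :
    SuspFaces Y T ↔ Y T.toLeft ∧ ¬ (Sum.inr false ∈ T ∧ Sum.inr true ∈ T) := by
  constructor
  · rintro ⟨σ, hσ, rfl | rfl | rfl⟩ <;> refine ⟨by convert hσ; ext; simp, by simp⟩
  · rintro ⟨hY, hT⟩
    refine ⟨T.toLeft, hY, ?_⟩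
    by_cases hf : Sum.inr false ∈ T
    · have ht : Sum.inr true ∉ T := fun ht => hT ⟨hf, ht⟩
      right; left; ext (a | (_ | _)) <;> simp [hf, ht]
    by_cases ht : Sum.inr true ∈ T
    · right; right; ext (a | (_ | _)) <;> simp [hf, ht]
    · left; ext (a | (_ | _)) <;> simp [hf, ht]

theorem toLeft_map_thetaEquiv {m : ℕ} (p : Fin m) (F : Finset (Option (Fin (m + 1))))
    (hF : ¬ (p.castSucc ∈ F.eraseNone ∧ p.succ ∈ F.eraseNone)) :
    (F.map (thetaEquiv p).toEmbedding).toLeft =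
      ((if none ∈ F then {p.castSucc, p.succ} ∪ F.eraseNone else F.eraseNone)ᶜ.image
        p.predAbove)ᶜ := by
  ext i
  simp only [Finset.mem_toLeft, Finset.mem_map_equiv, Finset.mem_compl, Finset.mem_image]
  by_cases hi : i = p
  · subst hi
    simp only [Fin.predAbove_eq_self_iff, and_or_left, exists_or, exists_eq_right]
    split_ifs with hnone
    · simp [thetaEquiv, hnone]
    · simpa [thetaEquiv, hnone] using hF
  · simp only [Fin.predAbove_eq_iff_of_ne hi, exists_eq_right]
    split_ifs <;>
      simp [thetaEquiv, hi, Fin.succAbove_ne, Fin.succAbove_castSucc_ne_succ hi]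

theorem subdivision_of_doubled_word_eq_suspension_general (cs : CoxeterSystem M W)
    {m : ℕ} (Q : Fin m → B) (p : Fin m) (ρ : W) :
    Function.Bijective (theta p) ∧
    ∀ F : Finset (Option (Fin (m + 1))),
      SubdivFaces (fun G => ∃ G₀ : Finset (Fin (m + 1)),
          IsFace cs (doubleAt Q p) ρ G₀ ∧ G = G₀.image some)
        (some p.castSucc) (some p.succ) none F ↔
      SuspFaces (IsFace cs Q ρ) (F.image (theta p)) := by
  refine ⟨(thetaEquiv p).bijective, fun F => ?_⟩
  have himage : F.image (theta p) = F.map (thetaEquiv p).toEmbedding := by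
    rw [Finset.map_eq_image]; rfl
  rw [subdivFaces_iff _ (Fin.castSucc_lt_succ (i := p)).ne, suspFaces_iff, himage,
    doubleAt_eq_comp_predAbove, isFace_comp_iff cs Q (Fin.predAbove_right_monotone p)]
  have hsusp : ∀ b, Sum.inr b ∈ F.map (thetaEquiv p).toEmbedding ↔
      (if b then p.succ else p.castSucc) ∈ F.eraseNone := by
    rintro (_ | _) <;> simp [Finset.mem_map_equiv, thetaEquiv]
  simp only [hsusp, Bool.false_eq_true, if_false, if_true]
  exact and_congr_left fun hF => by rw [toLeft_map_thetaEquiv p F hF]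

/-- If `{p}` is a face of `Δ(Q, ρ)`, then the edge subdivision of `Δ(Q', ρ)` along the
edge formed by the two doubled positions (with new vertex `none`) is isomorphic, under
the vertex bijection `theta p`, to the suspension of `Δ(Q, ρ)`. -/
theorem subdivision_of_doubled_word_eq_suspension [Finite W] (cs : CoxeterSystem M W)
    {m : ℕ} (Q : Fin m → B) (p : Fin m) (ρ : W)
    (hp : IsFace cs Q ρ {p}) :
    Function.Bijective (theta p) ∧
    ∀ F : Finset (Option (Fin (m + 1))),
      SubdivFaces (fun G => ∃ G₀ : Finset (Fin (m + 1)),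
          IsFace cs (doubleAt Q p) ρ G₀ ∧ G = G₀.image some)
        (some p.castSucc) (some p.succ) none F ↔
      SuspFaces (IsFace cs Q ρ) (F.image (theta p)) :=
  subdivision_of_doubled_word_eq_suspension_general cs Q p ρ

end SubwordComplexNil
end
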